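/- arXiv:2407.06197 — 2 statements merged into one kernel-verified Lean document; each statement's English description precedes it below -/
import Mathlib

section
/- Let G be a finite simple graph comprised of exactly two communities C_1 and C_2 with |C_1| = |C_2| = n, and let k be the total number of intercommunity edges between C_1 and C_2. If k ≤ n − 1, then for every α ∈ [0,1], every intercommunity edge e between C_1 and C_2 satisfies κ^α(e) ≤ 0. -/
/-!
By the easy direction of Kantorovich duality it suffices to find a potential `f` that changes by
at most one along edges and satisfies `E_{m_x} f - E_{m_y} f ≥ 1`. Take `f = 3` on the vertices of
`C₁` without neighbours in `C₂`, `f = 2` on the rest of `C₁`, `f = 1` on the vertices of `C₂` with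
neighbours in `C₁` and `f = 0` on the rest of `C₂`. If `x ∈ C₁` has `b` neighbours in `C₂` and `s`
other vertices of `C₁` have neighbours in `C₂`, these account for `s + b ≤ k ≤ n - 1` distinct
intercommunity edges, so at least `b` of the `n - 1` other vertices of `C₁` carry the value `3`.
Hence the average of `f` over the neighbours of `x` is at least `2`, and so is `E_{m_x} f`. As
`3 - f` is the potential of the exchanged communities, the same bound, applied to `y ∈ C₂` (and
using `|C₂| = n`), gives `E_{m_y} f ≤ 1`.
-/

open Finset

/-- A probability measure on the vertex set. -/
def IsProbMeasure {V : Type*} [Fintype V] (μ : V → ℝ) : Prop :=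
  (∀ z, 0 ≤ μ z) ∧ ∑ z, μ z = 1

/-- A transference plan between two probability measures. -/
def IsTransferencePlan {V : Type*} [Fintype V] (μ ν : V → ℝ) (π : V → V → ℝ) : Prop :=
  (∀ i j, 0 ≤ π i j) ∧ (∀ i, ∑ j, π i j = μ i) ∧ (∀ j, ∑ i, π i j = ν j)

/-- The 1-Wasserstein distance between two measures on a graph:
the infimum of the transport cost over all transference plans. -/
noncomputable def Wass {V : Type*} [Fintype V] (G : SimpleGraph V) (μ ν : V → ℝ) : ℝ :=
  sInf {c : ℝ | ∃ π : V → V → ℝ, IsTransferencePlan μ ν π ∧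
    c = ∑ i : V, ∑ j : V, π i j * (G.dist i j : ℝ)}

open scoped Classical in
/-- The α-lazy random walk measure at a vertex `x`:
mass α at `x`, mass (1-α)/dₓ at each neighbour of `x`. -/
noncomputable def lazyWalk {V : Type*} [Fintype V] (G : SimpleGraph V) (α : ℝ) (x : V) :
    V → ℝ :=
  fun z =>
    if z = x then α
    else if G.Adj x z then (1 - α) / ((G.neighborSet x).ncard : ℝ) else 0

/-- The α-Ollivier-Ricci curvature of the edge `xy`: κ = 1 − W(mₓ, m_y). -/
noncomputable def kappa {V : Type*} [Fintype V] (G : SimpleGraph V) (α : ℝ) (x y : V) : ℝ :=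
  1 - Wass G (lazyWalk G α x) (lazyWalk G α y)

namespace SimpleGraph

variable {V : Type*} (G : SimpleGraph V)

lemma sub_le_length_of_adj {f : V → ℝ} (hf : ∀ i j, G.Adj i j → f i - f j ≤ 1) :
    ∀ {i j : V} (p : G.Walk i j), f i - f j ≤ p.length
  | _, _, .nil => by simp
  | _, _, .cons h p => by
    have := sub_le_length_of_adj hf p
    have := hf _ _ h
    push_cast [Walk.length_cons]
    linarith

lemma sub_le_dist_of_adj {f : V → ℝ} (hf : ∀ i j, G.Adj i j → f i - f j ≤ 1) {i j : V}
    (h : G.Reachable i j) : f i - f j ≤ G.dist i j := by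
  obtain ⟨p, hp⟩ := h.exists_walk_length_eq_dist
  exact hp ▸ G.sub_le_length_of_adj hf p

lemma preconnected_of_adj_of_isClique {C₁ C₂ : Set V} (hcover : ∀ z, z ∈ C₁ ∨ z ∈ C₂)
    (hcl₁ : G.IsClique C₁) (hcl₂ : G.IsClique C₂) {x y : V} (hx : x ∈ C₁) (hy : y ∈ C₂)
    (hxy : G.Adj x y) : G.Preconnected := by
  have hclique : ∀ {C : Set V}, G.IsClique C → ∀ u ∈ C, ∀ v ∈ C, G.Reachable u v := by
    intro C hC u hu v hv
    obtain rfl | huv := eq_or_ne u v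
    · rfl
    · exact (hC hu hv huv).reachable
  have hreach : ∀ z, G.Reachable x z := fun z => (hcover z).elim
    (hclique hcl₁ x hx z) (hxy.reachable.trans <| hclique hcl₂ y hy z ·)
  exact fun u v => (hreach u).symm.trans (hreach v)

lemma ncard_neighborSet_eq_degree [Fintype V] [DecidableRel G.Adj] (x : V) :
    (G.neighborSet x).ncard = G.degree x := by
  rw [← Nat.card_coe_set_eq, Nat.card_eq_fintype_card, card_neighborSet_eq_degree]

end SimpleGraph

lemma sum_mul_sub_sum_mul_le_wass {V : Type*} [Fintype V] (G : SimpleGraph V) {μ ν : V → ℝ}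
    (hμ : IsProbMeasure μ) (hν : IsProbMeasure ν) {f : V → ℝ}
    (hf : ∀ i j, f i - f j ≤ G.dist i j) :
    ∑ i, μ i * f i - ∑ j, ν j * f j ≤ Wass G μ ν := by
  apply le_csInf
  · refine ⟨_, fun i j => μ i * ν j, ⟨fun i j => mul_nonneg (hμ.1 i) (hν.1 j), ?_, ?_⟩, rfl⟩
    · intro i; rw [← mul_sum, hν.2, mul_one]
    · intro j; rw [← sum_mul, hμ.2, one_mul]
  · rintro c ⟨π, ⟨hπ, hrow, hcol⟩, rfl⟩
    calc ∑ i, μ i * f i - ∑ j, ν j * f j = ∑ i, ∑ j, π i j * (f i - f j) := by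
          simp only [mul_sub, sum_sub_distrib, ← sum_mul, hrow]
          rw [sum_comm]
          simp only [← sum_mul, hcol]
      _ ≤ ∑ i, ∑ j, π i j * G.dist i j :=
          sum_le_sum fun i _ => sum_le_sum fun j _ => mul_le_mul_of_nonneg_left (hf i j) (hπ i j)

section LazyWalk

open SimpleGraph

variable {V : Type*} [Fintype V] (G : SimpleGraph V) [DecidableRel G.Adj]

lemma sum_lazyWalk_mul (α : ℝ) (x : V) (f : V → ℝ) :
    ∑ z, lazyWalk G α x z * f z =
      α * f x + (1 - α) / G.degree x * ∑ z ∈ G.neighborFinset x, f z := by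
  classical
  have hterm : ∀ z, lazyWalk G α x z * f z = (if z = x then α * f x else 0) +
      (if G.Adj x z then (1 - α) / G.degree x * f z else 0) := by
    intro z
    obtain rfl | hzx := eq_or_ne z x
    · simp [lazyWalk]
    · by_cases hadj : G.Adj x z <;> simp [lazyWalk, hzx, hadj, G.ncard_neighborSet_eq_degree]
  simp only [hterm, sum_add_distrib, sum_ite_eq', mem_univ, if_true, ← mul_sum, ← sum_filter,
    neighborFinset_eq_filter]

lemma isProbMeasure_lazyWalk {α : ℝ} (hα0 : 0 ≤ α) (hα1 : α ≤ 1) {x : V}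
    (hdeg : 0 < G.degree x) : IsProbMeasure (lazyWalk G α x) := by
  refine ⟨fun z => ?_, ?_⟩
  · unfold lazyWalk
    split_ifs
    exacts [hα0, div_nonneg (by linarith) (Nat.cast_nonneg _), le_rfl]
  · have h := sum_lazyWalk_mul G α x 1
    simp only [Pi.one_apply, mul_one, sum_const, card_neighborFinset_eq_degree, nsmul_eq_mul] at h
    rw [h]
    field_simp
    ring

lemma le_sum_lazyWalk_mul {α : ℝ} (hα0 : 0 ≤ α) (hα1 : α ≤ 1) {x : V} (hdeg : 0 < G.degree x)
    {f : V → ℝ} {c : ℝ} (hfx : c ≤ f x)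
    (hnbr : c * G.degree x ≤ ∑ z ∈ G.neighborFinset x, f z) :
    c ≤ ∑ z, lazyWalk G α x z * f z := by
  have hdeg' : (0 : ℝ) < G.degree x := by exact_mod_cast hdeg
  have hmean : c ≤ (∑ z ∈ G.neighborFinset x, f z) / G.degree x := by
    rwa [le_div_iff₀ hdeg']
  rw [sum_lazyWalk_mul, div_mul_eq_mul_div, mul_div_assoc]
  nlinarith

end LazyWalk

namespace SimpleGraph

variable {V : Type*} (G : SimpleGraph V)

def crossEdges (C₁ C₂ : Finset V) : Set (Sym2 V) :=
  {e ∈ G.edgeSet | ∃ u v : V, e = s(u, v) ∧ u ∈ C₁ ∧ v ∈ C₂}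

lemma crossEdges_comm (C₁ C₂ : Finset V) : G.crossEdges C₂ C₁ = G.crossEdges C₁ C₂ := by
  ext e
  constructor <;> rintro ⟨he, u, v, rfl, hu, hv⟩ <;> exact ⟨he, v, u, Sym2.eq_swap, hv, hu⟩

variable [DecidableEq V] [DecidableRel G.Adj] {C₁ C₂ : Finset V}

lemma ncard_crossEdges_eq_sum (hdisj : Disjoint C₁ C₂) :
    (G.crossEdges C₁ C₂).ncard = ∑ u ∈ C₁, #{v ∈ C₂ | G.Adj u v} := by
  have hset : G.crossEdges C₁ C₂ =
      ({p ∈ C₁ ×ˢ C₂ | G.Adj p.1 p.2}.image fun p => s(p.1, p.2) : Finset (Sym2 V)) := by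
    ext e
    simp only [crossEdges, Set.mem_ofPred_eq, coe_image, coe_filter, mem_product, Set.mem_image]
    constructor
    · rintro ⟨he, u, v, rfl, hu, hv⟩
      exact ⟨(u, v), ⟨⟨hu, hv⟩, he⟩, rfl⟩
    · rintro ⟨⟨u, v⟩, ⟨⟨hu, hv⟩, he⟩, rfl⟩
      exact ⟨he, u, v, rfl, hu, hv⟩
  have hinj : Set.InjOn (fun p : V × V => s(p.1, p.2)) ↑{p ∈ C₁ ×ˢ C₂ | G.Adj p.1 p.2} := by
    rintro ⟨u, v⟩ huv ⟨u', v'⟩ huv' heq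
    simp only [coe_filter, mem_product, Set.mem_ofPred_eq] at huv huv'
    rcases Sym2.eq_iff.mp heq with ⟨rfl, rfl⟩ | ⟨rfl, -⟩
    · rfl
    · exact absurd huv'.1.2 (Finset.disjoint_left.mp hdisj huv.1.1)
  rw [hset, Set.ncard_coe_finset, card_image_of_injOn hinj, card_filter, sum_product]
  simp only [card_filter]

lemma card_filter_erase_add_card_filter_le_ncard_crossEdges (hdisj : Disjoint C₁ C₂)
    {x : V} (hx : x ∈ C₁) :
    #{z ∈ C₁.erase x | ∃ w ∈ C₂, G.Adj z w} + #{w ∈ C₂ | G.Adj x w} ≤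
      (G.crossEdges C₁ C₂).ncard := by
  rw [G.ncard_crossEdges_eq_sum hdisj, ← add_sum_erase _ _ hx, add_comm]
  gcongr
  rw [card_filter]
  gcongr with z
  split_ifs with h
  · obtain ⟨w, hw, hzw⟩ := h
    exact card_pos.mpr ⟨w, mem_filter.mpr ⟨hw, hzw⟩⟩
  · exact Nat.zero_le _

section Potential

variable [Fintype V]

lemma neighborFinset_eq_erase_union (hcover : C₁ ∪ C₂ = univ) (hcl : G.IsClique (C₁ : Set V))
    {x : V} (hx : x ∈ C₁) : G.neighborFinset x = C₁.erase x ∪ {w ∈ C₂ | G.Adj x w} := by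
  ext z
  simp only [mem_neighborFinset, mem_union, mem_erase, mem_filter]
  refine ⟨fun hz => ?_, ?_⟩
  · rcases mem_union.mp (hcover ▸ mem_univ z) with h | h
    exacts [Or.inl ⟨hz.ne.symm, h⟩, Or.inr ⟨h, hz⟩]
  · rintro (⟨hzx, hz⟩ | ⟨-, hz⟩)
    exacts [hcl hx hz (Ne.symm hzx), hz]

variable (C₁ C₂) in
def communityPotential (z : V) : ℝ :=
  if z ∈ C₁ then (if ∃ w ∈ C₂, G.Adj z w then 2 else 3)
  else (if ∃ w ∈ C₁, G.Adj z w then 1 else 0)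

lemma communityPotential_swap (hdisj : Disjoint C₁ C₂) (hcover : C₁ ∪ C₂ = univ) (z : V) :
    G.communityPotential C₂ C₁ z = 3 - G.communityPotential C₁ C₂ z := by
  unfold communityPotential
  rcases mem_union.mp (hcover ▸ mem_univ z) with hz | hz
  · simp only [hz, Finset.disjoint_left.mp hdisj hz, if_true, if_false]
    split_ifs <;> norm_num
  · simp only [hz, Finset.disjoint_right.mp hdisj hz, if_true, if_false]
    split_ifs <;> norm_num

lemma communityPotential_sub_le_one (hcover : C₁ ∪ C₂ = univ) {i j : V} (hij : G.Adj i j) :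
    G.communityPotential C₁ C₂ i - G.communityPotential C₁ C₂ j ≤ 1 := by
  have hC₂ : ∀ z, z ∉ C₁ → z ∈ C₂ := fun z hz =>
    (mem_union.mp (hcover ▸ mem_univ z)).resolve_left hz
  unfold communityPotential
  by_cases hi : i ∈ C₁ <;> by_cases hj : j ∈ C₁
  · simp only [hi, hj, if_true]; split_ifs <;> norm_num
  · have hi' : ∃ w ∈ C₂, G.Adj i w := ⟨j, hC₂ j hj, hij⟩
    have hj' : ∃ w ∈ C₁, G.Adj j w := ⟨i, hi, hij.symm⟩
    simp only [hi, hj, hi', hj', if_true, if_false]; norm_num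
  all_goals simp only [hi, hj, if_true, if_false]; split_ifs <;> norm_num

lemma two_mul_degree_le_sum_communityPotential (hdisj : Disjoint C₁ C₂)
    (hcover : C₁ ∪ C₂ = univ) (hcl : G.IsClique (C₁ : Set V)) {x : V} (hx : x ∈ C₁)
    (hk : (G.crossEdges C₁ C₂).ncard + 1 ≤ #C₁) :
    2 * (G.degree x : ℝ) ≤ ∑ z ∈ G.neighborFinset x, G.communityPotential C₁ C₂ z := by
  set B := {w ∈ C₂ | G.Adj x w}
  set T := {z ∈ C₁.erase x | ∃ w ∈ C₂, G.Adj z w}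
  set I := {z ∈ C₁.erase x | ¬∃ w ∈ C₂, G.Adj z w}
  have hdisjB : Disjoint (C₁.erase x) B :=
    disjoint_of_subset_left (erase_subset x C₁) <|
      disjoint_of_subset_right (filter_subset _ C₂) hdisj
  have hsum₁ : ∑ z ∈ C₁.erase x, G.communityPotential C₁ C₂ z = 2 * #T + 3 * #I := by
    have hC₁ : ∀ z ∈ C₁, G.communityPotential C₁ C₂ z = if ∃ w ∈ C₂, G.Adj z w then 2 else 3 :=
      fun z hz => if_pos hz
    rw [sum_congr rfl fun z hz => hC₁ z (mem_of_mem_erase hz), sum_ite]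
    simp only [sum_const, nsmul_eq_mul]
    ring
  have hsum₂ : ∑ z ∈ B, G.communityPotential C₁ C₂ z = #B := by
    rw [sum_congr rfl fun z hz => ?_, sum_const, nsmul_one]
    obtain ⟨hz, hxz⟩ := mem_filter.mp hz
    rw [communityPotential, if_neg (Finset.disjoint_right.mp hdisj hz),
      if_pos ⟨x, hx, hxz.symm⟩]
  -- `#T + #B ≤ k < #C₁ = #T + #I + 1` forces `#B ≤ #I`
  have hcount : #T + #B ≤ (G.crossEdges C₁ C₂).ncard :=
    G.card_filter_erase_add_card_filter_le_ncard_crossEdges hdisj hx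
  have hsplit : #T + #I = #(C₁.erase x) := card_filter_add_card_filter_not _
  have herase := card_erase_add_one hx
  rw [← card_neighborFinset_eq_degree, G.neighborFinset_eq_erase_union hcover hcl hx,
    sum_union hdisjB, card_union_of_disjoint hdisjB, hsum₁, hsum₂]
  exact_mod_cast (by omega : 2 * (#(C₁.erase x) + #B) ≤ 2 * #T + 3 * #I + #B)

variable {α : ℝ}

lemma two_le_sum_lazyWalk_mul_communityPotential (hdisj : Disjoint C₁ C₂)
    (hcover : C₁ ∪ C₂ = univ) (hcl : G.IsClique (C₁ : Set V)) (hα0 : 0 ≤ α) (hα1 : α ≤ 1)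
    {x : V} (hx : x ∈ C₁) (hdeg : 0 < G.degree x) (hk : (G.crossEdges C₁ C₂).ncard + 1 ≤ #C₁) :
    2 ≤ ∑ z, lazyWalk G α x z * G.communityPotential C₁ C₂ z := by
  refine le_sum_lazyWalk_mul G hα0 hα1 hdeg ?_ ?_
  · rw [communityPotential, if_pos hx]
    split_ifs <;> norm_num
  · exact G.two_mul_degree_le_sum_communityPotential hdisj hcover hcl hx hk

lemma sum_lazyWalk_mul_communityPotential_le_one (hdisj : Disjoint C₁ C₂)
    (hcover : C₁ ∪ C₂ = univ) (hcl : G.IsClique (C₂ : Set V)) (hα0 : 0 ≤ α) (hα1 : α ≤ 1)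
    {y : V} (hy : y ∈ C₂) (hdeg : 0 < G.degree y) (hk : (G.crossEdges C₁ C₂).ncard + 1 ≤ #C₂) :
    ∑ z, lazyWalk G α y z * G.communityPotential C₁ C₂ z ≤ 1 := by
  have h := G.two_le_sum_lazyWalk_mul_communityPotential hdisj.symm (union_comm C₁ C₂ ▸ hcover)
    hcl hα0 hα1 hy hdeg (G.crossEdges_comm C₁ C₂ ▸ hk)
  simp only [G.communityPotential_swap hdisj hcover, mul_sub, sum_sub_distrib, ← sum_mul,
    (isProbMeasure_lazyWalk G hα0 hα1 hdeg).2] at h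
  linarith

end Potential

end SimpleGraph

theorem nonpos_curvature_two_equal_communities_general
    {V : Type*} [Fintype V] [DecidableEq V] (G : SimpleGraph V)
    (C₁ C₂ : Finset V) (hdisj : Disjoint C₁ C₂) (hcover : C₁ ∪ C₂ = Finset.univ)
    (hcl₁ : ∀ u ∈ C₁, ∀ v ∈ C₁, u ≠ v → G.Adj u v)
    (hcl₂ : ∀ u ∈ C₂, ∀ v ∈ C₂, u ≠ v → G.Adj u v)
    (n : ℕ) (hm : C₁.card = n) (hn : C₂.card = n)
    (k : ℕ)
    (hk : k = {e ∈ G.edgeSet | ∃ u v : V, e = s(u, v) ∧ u ∈ C₁ ∧ v ∈ C₂}.ncard)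
    (hbound : k + 1 ≤ n)
    (α : ℝ) (hα0 : 0 ≤ α) (hα1 : α ≤ 1)
    (x y : V) (hx : x ∈ C₁) (hy : y ∈ C₂) (hxy : G.Adj x y) :
    kappa G α x y ≤ 0 := by
  classical
  have hk' : (G.crossEdges C₁ C₂).ncard = k := hk.symm
  have hdx : 0 < G.degree x := G.degree_pos_iff_exists_adj x |>.mpr ⟨y, hxy⟩
  have hdy : 0 < G.degree y := G.degree_pos_iff_exists_adj y |>.mpr ⟨x, hxy.symm⟩
  have hconn : G.Preconnected := G.preconnected_of_adj_of_isClique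
    (fun z => mem_union.mp (hcover ▸ mem_univ z)) hcl₁ hcl₂ hx hy hxy
  have hfx := G.two_le_sum_lazyWalk_mul_communityPotential hdisj hcover hcl₁ hα0 hα1 hx hdx
    (by omega)
  have hfy := G.sum_lazyWalk_mul_communityPotential_le_one hdisj hcover hcl₂ hα0 hα1 hy hdy
    (by omega)
  have hW := sum_mul_sub_sum_mul_le_wass G (isProbMeasure_lazyWalk G hα0 hα1 hdx)
    (isProbMeasure_lazyWalk G hα0 hα1 hdy) fun i j =>
      G.sub_le_dist_of_adj (fun _ _ => G.communityPotential_sub_le_one hcover) (hconn i j)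
  unfold kappa
  linarith

/-- A graph comprised of exactly two communities of equal size `n` with `k`
intercommunity edges. If `k ≤ n − 1`, then every intercommunity edge has nonpositive
α-Ollivier-Ricci curvature for every `α ∈ [0,1]`. -/
theorem nonpos_curvature_two_equal_communities
    {V : Type*} [Fintype V] [DecidableEq V] (G : SimpleGraph V)
    (C₁ C₂ : Finset V) (hdisj : Disjoint C₁ C₂) (hcover : C₁ ∪ C₂ = Finset.univ)
    (hne₁ : C₁.Nonempty) (hne₂ : C₂.Nonempty)
    (hcl₁ : ∀ u ∈ C₁, ∀ v ∈ C₁, u ≠ v → G.Adj u v)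
    (hcl₂ : ∀ u ∈ C₂, ∀ v ∈ C₂, u ≠ v → G.Adj u v)
    (n : ℕ) (hm : C₁.card = n) (hn : C₂.card = n)
    (k : ℕ)
    (hk : k = {e ∈ G.edgeSet | ∃ u v : V, e = s(u, v) ∧ u ∈ C₁ ∧ v ∈ C₂}.ncard)
    (hbound : k + 1 ≤ n)
    (α : ℝ) (hα0 : 0 ≤ α) (hα1 : α ≤ 1)
    (x y : V) (hx : x ∈ C₁) (hy : y ∈ C₂) (hxy : G.Adj x y) :
    kappa G α x y ≤ 0 :=
  nonpos_curvature_two_equal_communities_general G C₁ C₂ hdisj hcover hcl₁ hcl₂ n hm hn k hk hbound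
    α hα0 hα1 x y hx hy hxy
end

section
/- Let n ≥ 3 and let G_n be the graph on the 2n vertices a_0, …, a_{n−1}, b_0, …, b_{n−1} whose edges are: all pairs a_i a_j (i ≠ j), all pairs b_i b_j (i ≠ j), and the intercommunity edges a_i b_i for i = 0, …, n−2. Then for every α ∈ [0,1], the 1-Wasserstein distance between the α-lazy random walk measures at a_0 and b_0 satisfies W(m_{a_0}, m_{b_0}) ≥ 1; equivalently, κ^α(a_0 b_0) ≤ 0. -/
open Finset

/-- The graph on vertices `a₀,…,a_{n−1}` (the `Sum.inl` copy of `Fin n`) and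
`b₀,…,b_{n−1}` (the `Sum.inr` copy): both copies are complete graphs, and the
intercommunity edges are `aᵢbᵢ` for `i = 0,…,n−2`. -/
def Gn (n : ℕ) : SimpleGraph (Fin n ⊕ Fin n) :=
  SimpleGraph.fromRel (fun u v =>
    match u, v with
    | Sum.inl _, Sum.inl _ => True
    | Sum.inr _, Sum.inr _ => True
    | Sum.inl i, Sum.inr j => i = j ∧ (i : ℕ) < n - 1
    | Sum.inr _, Sum.inl _ => False)

open SimpleGraph in
lemma lip_walk {V : Type*} (G : SimpleGraph V) (f : V → ℝ)
    (hf : ∀ u v, G.Adj u v → f u - f v ≤ 1) :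
    ∀ {u v : V} (p : G.Walk u v), f u - f v ≤ (p.length : ℝ) := by
  intro u v p
  induction p with
  | nil => simp
  | @cons u w v h p ih =>
      have := hf _ _ h
      simp only [SimpleGraph.Walk.length_cons, Nat.cast_add, Nat.cast_one]
      linarith

lemma lip_dist {V : Type*} (G : SimpleGraph V) (hG : G.Preconnected) (f : V → ℝ)
    (hf : ∀ u v, G.Adj u v → f u - f v ≤ 1) (u v : V) :
    f u - f v ≤ (G.dist u v : ℝ) := by
  obtain ⟨p, hp⟩ := (hG u v).exists_walk_length_eq_dist
  calc f u - f v ≤ (p.length : ℝ) := lip_walk G f hf p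
    _ = _ := by rw [hp]

open scoped Classical in
lemma lazyWalk_eq {V : Type*} [Fintype V] (G : SimpleGraph V) (α : ℝ) (x z : V) :
    lazyWalk G α x z =
      (if z = x then α else 0) +
      (if G.Adj x z then (1-α)/((G.neighborSet x).ncard : ℝ) else 0) := by
  unfold lazyWalk
  by_cases h : z = x
  · subst h; simp [G.irrefl]
  · simp [h]

lemma Gn_adj_ll {n : ℕ} (i j : Fin n) : (Gn n).Adj (.inl i) (.inl j) ↔ i ≠ j := by
  simp [Gn, SimpleGraph.fromRel_adj]

lemma Gn_adj_rr {n : ℕ} (i j : Fin n) : (Gn n).Adj (.inr i) (.inr j) ↔ i ≠ j := by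
  simp [Gn, SimpleGraph.fromRel_adj]

lemma Gn_adj_lr {n : ℕ} (i j : Fin n) :
    (Gn n).Adj (.inl i) (.inr j) ↔ i = j ∧ (i : ℕ) < n - 1 := by
  simp [Gn, SimpleGraph.fromRel_adj]

lemma Gn_adj_rl {n : ℕ} (i j : Fin n) :
    (Gn n).Adj (.inr i) (.inl j) ↔ j = i ∧ (j : ℕ) < n - 1 := by
  simp [Gn, SimpleGraph.fromRel_adj]

example (n : ℕ) : True := trivial
lemma Gn_preconnected {n : ℕ} (hn : 3 ≤ n) : (Gn n).Preconnected := by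
  have h0 : 0 < n := by omega
  set z0 : Fin n := ⟨0, h0⟩ with hz0
  have hub : ∀ v, (Gn n).Reachable (Sum.inl z0) v := by
    intro v
    match v with
    | Sum.inl i =>
        by_cases h : i = z0
        · subst h; exact SimpleGraph.Reachable.refl _
        · exact SimpleGraph.Adj.reachable ((Gn_adj_ll z0 i).mpr (Ne.symm h))
    | Sum.inr i =>
        have h1 : (Gn n).Adj (Sum.inl z0) (Sum.inr z0) := by
          rw [Gn_adj_lr]; exact ⟨rfl, by simp [hz0]; omega⟩
        by_cases h : i = z0
        · subst h; exact h1.reachable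
        · exact h1.reachable.trans
            (SimpleGraph.Adj.reachable ((Gn_adj_rr z0 i).mpr (Ne.symm h)))
  intro u v
  exact (hub u).symm.trans (hub v)

lemma Gn_ncard_a {n : ℕ} (hn : 3 ≤ n) (h0 : 0 < n) :
    ((Gn n).neighborSet (Sum.inl (⟨0, h0⟩ : Fin n))).ncard = n := by
  have h0 : 0 < n := by omega
  set z0 : Fin n := ⟨0, h0⟩ with hz0
  classical
  set g : Fin n → Fin n ⊕ Fin n := fun i => if i = z0 then Sum.inr z0 else Sum.inl i with hg
  have hginj : Function.Injective g := by
    intro i j hij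
    simp only [hg] at hij
    split_ifs at hij with h1 h2 h2 <;> simp_all
  have hset : (Gn n).neighborSet (Sum.inl z0) = Set.range g := by
    ext z
    simp only [SimpleGraph.mem_neighborSet, Set.mem_range]
    constructor
    · intro hz
      match z with
      | Sum.inl i =>
          have : z0 ≠ i := (Gn_adj_ll z0 i).mp hz
          exact ⟨i, by simp [hg, Ne.symm this]⟩
      | Sum.inr i =>
          have : z0 = i := ((Gn_adj_lr z0 i).mp hz).1
          exact ⟨z0, by simp [hg, ← this]⟩
    · rintro ⟨j, rfl⟩
      simp only [hg]
      split_ifs with h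
      · rw [Gn_adj_lr]; exact ⟨rfl, by simp [hz0]; omega⟩
      · exact (Gn_adj_ll z0 j).mpr (Ne.symm h)
  rw [hset, ← Set.image_univ, Set.ncard_image_of_injective _ hginj, Set.ncard_univ, Nat.card_eq_fintype_card, Fintype.card_fin]

lemma Gn_ncard_b {n : ℕ} (hn : 3 ≤ n) (h0 : 0 < n) :
    ((Gn n).neighborSet (Sum.inr (⟨0, h0⟩ : Fin n))).ncard = n := by
  have h0 : 0 < n := by omega
  set z0 : Fin n := ⟨0, h0⟩ with hz0
  classical
  set g : Fin n → Fin n ⊕ Fin n := fun i => if i = z0 then Sum.inl z0 else Sum.inr i with hg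
  have hginj : Function.Injective g := by
    intro i j hij
    simp only [hg] at hij
    split_ifs at hij with h1 h2 h2 <;> simp_all
  have hset : (Gn n).neighborSet (Sum.inr z0) = Set.range g := by
    ext z
    simp only [SimpleGraph.mem_neighborSet, Set.mem_range]
    constructor
    · intro hz
      match z with
      | Sum.inr i =>
          have : z0 ≠ i := (Gn_adj_rr z0 i).mp hz
          exact ⟨i, by simp [hg, Ne.symm this]⟩
      | Sum.inl i =>
          have : i = z0 := ((Gn_adj_rl z0 i).mp hz).1
          exact ⟨z0, by simp [hg, this]⟩
    · rintro ⟨j, rfl⟩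
      simp only [hg]
      split_ifs with h
      · rw [Gn_adj_rl]; exact ⟨rfl, by simp [hz0]; omega⟩
      · exact (Gn_adj_rr z0 j).mpr (Ne.symm h)
  rw [hset, ← Set.image_univ, Set.ncard_image_of_injective _ hginj, Set.ncard_univ, Nat.card_eq_fintype_card, Fintype.card_fin]
lemma sum_special {n : ℕ} (z0 zl : Fin n) (hne : z0 ≠ zl) (g : Fin n → ℝ) (a b c : ℝ)
    (h0 : g z0 = a) (hl : g zl = b) (ho : ∀ i, i ≠ z0 → i ≠ zl → g i = c) :
    ∑ i, g i = n * c + (a - c) + (b - c) := by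
  classical
  have key : ∀ i, g i = c + (if i = z0 then a - c else 0) + (if i = zl then b - c else 0) := by
    intro i
    by_cases h1 : i = z0
    · subst h1
      rw [if_pos rfl, if_neg hne, h0]; ring
    · by_cases h2 : i = zl
      · subst h2
        rw [if_neg h1, if_pos rfl, hl]; ring
      · rw [if_neg h1, if_neg h2, ho i h1 h2]; ring
  rw [Finset.sum_congr rfl fun i _ => key i, Finset.sum_add_distrib, Finset.sum_add_distrib,
    Finset.sum_const, Finset.sum_ite_eq' Finset.univ z0, Finset.sum_ite_eq' Finset.univ zl]
  simp [mul_comm]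
lemma wass_ge_one {n : ℕ} (hn : 3 ≤ n) (h0 : 0 < n) (α : ℝ) (hα0 : 0 ≤ α) (hα1 : α ≤ 1) :
    1 ≤ Wass (Gn n) (lazyWalk (Gn n) α (Sum.inl (⟨0, h0⟩ : Fin n)))
        (lazyWalk (Gn n) α (Sum.inr (⟨0, h0⟩ : Fin n))) := by
  classical
  set z0 : Fin n := ⟨0, h0⟩ with hz0
  set zl : Fin n := ⟨n - 1, by omega⟩ with hzl
  have hz0l : z0 ≠ zl := by
    simp only [hz0, hzl, Ne, Fin.mk.injEq]
    omega
  set μ := lazyWalk (Gn n) α (Sum.inl z0) with hμdef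
  set ν := lazyWalk (Gn n) α (Sum.inr z0) with hνdef
  set c : ℝ := (1 - α) / n with hc
  have hn0 : (n : ℝ) ≠ 0 := by positivity
  have hc0 : 0 ≤ c := div_nonneg (by linarith) (Nat.cast_nonneg n)
  have hcn : (n : ℝ) * c = 1 - α := by rw [hc]; field_simp
  -- the Lipschitz potential
  set f : Fin n ⊕ Fin n → ℝ :=
    Sum.elim (fun i => if i = zl then 2 else 1) (fun i => if i = zl then -1 else 0) with hfdef
  -- explicit form of the lazy walk measures
  have hμz : ∀ z, μ z = (if z = Sum.inl z0 then α else 0) +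
      (if (Gn n).Adj (Sum.inl z0) z then c else 0) := by
    intro z
    rw [hμdef, lazyWalk_eq, Gn_ncard_a hn h0, ← hc]; congr
  have hνz : ∀ z, ν z = (if z = Sum.inr z0 then α else 0) +
      (if (Gn n).Adj (Sum.inr z0) z then c else 0) := by
    intro z
    rw [hνdef, lazyWalk_eq, Gn_ncard_b hn h0, ← hc]; congr
  -- generic weighted-sum formula
  have key : ∀ (x : Fin n ⊕ Fin n) (w : Fin n ⊕ Fin n → ℝ),
      (∑ z, w z * ((if z = x then α else 0) + (if (Gn n).Adj x z then c else 0)))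
      = w x * α + c * ((∑ i : Fin n, (if (Gn n).Adj x (Sum.inl i) then w (Sum.inl i) else 0))
          + ∑ i : Fin n, (if (Gn n).Adj x (Sum.inr i) then w (Sum.inr i) else 0)) := by
    intro x w
    have e1 : ∀ z, w z * ((if z = x then α else 0) + (if (Gn n).Adj x z then c else 0))
        = (if z = x then w z * α else 0) + c * (if (Gn n).Adj x z then w z else 0) := by
      intro z; split_ifs <;> ring
    rw [Finset.sum_congr rfl fun z _ => e1 z, Finset.sum_add_distrib,
      Finset.sum_ite_eq' Finset.univ x (fun z => w z * α), ← Finset.mul_sum,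
      Fintype.sum_sum_type]
    simp
  -- the eight inner sums
  have hA1 : (∑ i : Fin n, if (Gn n).Adj (Sum.inl z0) (Sum.inl i) then (1:ℝ) else 0)
      = (n : ℝ) - 1 := by
    rw [sum_special z0 zl hz0l _ 0 1 1 (by simp [Gn_adj_ll]) (by rw [if_pos ((Gn_adj_ll z0 zl).mpr hz0l)])
      (fun i h1 _ => by rw [if_pos ((Gn_adj_ll z0 i).mpr (Ne.symm h1))])]
    ring
  have hA2 : (∑ i : Fin n, if (Gn n).Adj (Sum.inl z0) (Sum.inr i) then (1:ℝ) else 0) = 1 := by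
    rw [sum_special z0 zl hz0l _ 1 0 0
      (by rw [if_pos ((Gn_adj_lr z0 z0).mpr ⟨rfl, by simp [hz0]; omega⟩)])
      (by rw [if_neg (by rw [Gn_adj_lr]; exact fun h => hz0l h.1)])
      (fun i h1 _ => by rw [if_neg (by rw [Gn_adj_lr]; exact fun h => h1 h.1.symm)])]
    ring
  have hA3 : (∑ i : Fin n, if (Gn n).Adj (Sum.inl z0) (Sum.inl i) then f (Sum.inl i) else 0)
      = (n : ℝ) := by
    rw [sum_special z0 zl hz0l _ 0 2 1 (by simp [Gn_adj_ll])
      (by rw [if_pos ((Gn_adj_ll z0 zl).mpr hz0l)]; simp [hfdef])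
      (fun i h1 h2 => by rw [if_pos ((Gn_adj_ll z0 i).mpr (Ne.symm h1))]; simp [hfdef, h2])]
    ring
  have hA4 : (∑ i : Fin n, if (Gn n).Adj (Sum.inl z0) (Sum.inr i) then f (Sum.inr i) else 0)
      = 0 := by
    rw [sum_special z0 zl hz0l _ 0 0 0
      (by rw [if_pos ((Gn_adj_lr z0 z0).mpr ⟨rfl, by simp [hz0]; omega⟩)]; simp [hfdef, hz0l.symm]; exact fun h => absurd h hz0l)
      (by rw [if_neg (by rw [Gn_adj_lr]; exact fun h => hz0l h.1)])
      (fun i h1 _ => by rw [if_neg (by rw [Gn_adj_lr]; exact fun h => h1 h.1.symm)])]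
    ring
  have hB1 : (∑ i : Fin n, if (Gn n).Adj (Sum.inr z0) (Sum.inl i) then (1:ℝ) else 0) = 1 := by
    rw [sum_special z0 zl hz0l _ 1 0 0
      (by rw [if_pos ((Gn_adj_rl z0 z0).mpr ⟨rfl, by simp [hz0]; omega⟩)])
      (by rw [if_neg (by rw [Gn_adj_rl]; exact fun h => hz0l h.1.symm)])
      (fun i h1 _ => by rw [if_neg (by rw [Gn_adj_rl]; exact fun h => h1 h.1)])]
    ring
  have hB2 : (∑ i : Fin n, if (Gn n).Adj (Sum.inr z0) (Sum.inr i) then (1:ℝ) else 0)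
      = (n : ℝ) - 1 := by
    rw [sum_special z0 zl hz0l _ 0 1 1 (by simp [Gn_adj_rr]) (by rw [if_pos ((Gn_adj_rr z0 zl).mpr hz0l)])
      (fun i h1 _ => by rw [if_pos ((Gn_adj_rr z0 i).mpr (Ne.symm h1))])]
    ring
  have hB3 : (∑ i : Fin n, if (Gn n).Adj (Sum.inr z0) (Sum.inl i) then f (Sum.inl i) else 0)
      = 1 := by
    rw [sum_special z0 zl hz0l _ 1 0 0
      (by rw [if_pos ((Gn_adj_rl z0 z0).mpr ⟨rfl, by simp [hz0]; omega⟩)]; simp [hfdef, hz0l.symm]; exact fun h => absurd h hz0l)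
      (by rw [if_neg (by rw [Gn_adj_rl]; exact fun h => hz0l h.1.symm)])
      (fun i h1 _ => by rw [if_neg (by rw [Gn_adj_rl]; exact fun h => h1 h.1)])]
    ring
  have hB4 : (∑ i : Fin n, if (Gn n).Adj (Sum.inr z0) (Sum.inr i) then f (Sum.inr i) else 0)
      = -1 := by
    rw [sum_special z0 zl hz0l _ 0 (-1) 0 (by simp [Gn_adj_rr])
      (by rw [if_pos ((Gn_adj_rr z0 zl).mpr hz0l)]; simp [hfdef])
      (fun i h1 h2 => by rw [if_pos ((Gn_adj_rr z0 i).mpr (Ne.symm h1))]; simp [hfdef, h2])]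
    ring
  -- the four measure sums
  have hfa0 : f (Sum.inl z0) = 1 := by simp [hfdef, hz0l]
  have hfb0 : f (Sum.inr z0) = 0 := by simp [hfdef, hz0l]
  have hμ1 : ∑ z, μ z = 1 := by
    have := key (Sum.inl z0) (fun _ => (1:ℝ))
    simp only [one_mul] at this
    rw [Finset.sum_congr rfl fun z _ => hμz z, this, hA1, hA2]
    nlinarith [hcn]
  have hν1 : ∑ z, ν z = 1 := by
    have := key (Sum.inr z0) (fun _ => (1:ℝ))
    simp only [one_mul] at this
    rw [Finset.sum_congr rfl fun z _ => hνz z, this, hB1, hB2]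
    nlinarith [hcn]
  have hfμ : ∑ z, f z * μ z = 1 := by
    rw [Finset.sum_congr rfl fun z _ => by rw [hμz z], key (Sum.inl z0) f, hA3, hA4, hfa0]
    nlinarith [hcn]
  have hfν : ∑ z, f z * ν z = 0 := by
    rw [Finset.sum_congr rfl fun z _ => by rw [hνz z], key (Sum.inr z0) f, hB3, hB4, hfb0]
    ring
  -- nonnegativity of the measures
  have hμ0 : ∀ z, 0 ≤ μ z := by
    intro z; rw [hμz z]; split_ifs <;> linarith
  have hν0 : ∀ z, 0 ≤ ν z := by
    intro z; rw [hνz z]; split_ifs <;> linarith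
  -- Lipschitz property of f
  have hlip : ∀ u v, (Gn n).Adj u v → f u - f v ≤ 1 := by
    intro u v huv
    rcases u with i | i <;> rcases v with j | j
    · simp only [hfdef, Sum.elim_inl]; split_ifs <;> norm_num
    · obtain ⟨rfl, hlt⟩ := (Gn_adj_lr i j).mp huv
      have h1 : i ≠ zl := by simp only [hzl, Ne, Fin.ext_iff]; omega
      simp [hfdef, h1]
    · obtain ⟨rfl, hlt⟩ := (Gn_adj_rl i j).mp huv
      have h1 : j ≠ zl := by simp only [hzl, Ne, Fin.ext_iff]; omega
      simp [hfdef, h1]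
    · simp only [hfdef, Sum.elim_inr]; split_ifs <;> norm_num
  have hdist : ∀ u v, f u - f v ≤ ((Gn n).dist u v : ℝ) :=
    lip_dist _ (Gn_preconnected hn) f hlip
  -- conclude
  apply le_csInf
  · refine ⟨_, fun i j => μ i * ν j, ⟨fun i j => mul_nonneg (hμ0 i) (hν0 j), ?_, ?_⟩, rfl⟩
    · intro i; rw [← Finset.mul_sum, hν1, mul_one]
    · intro j; rw [← Finset.sum_mul, hμ1, one_mul]
  · rintro x ⟨π, ⟨hπ0, hπμ, hπν⟩, rfl⟩
    have h1 : ∀ i, ∑ j, π i j * f i = f i * μ i := by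
      intro i; rw [← Finset.sum_mul, hπμ i, mul_comm]
    have h2 : ∀ j, ∑ i, π i j * f j = f j * ν j := by
      intro j; rw [← Finset.sum_mul, hπν j, mul_comm]
    have hsplit : (∑ i, ∑ j, π i j * (f i - f j))
        = (∑ z, f z * μ z) - (∑ z, f z * ν z) := by
      rw [show (∑ i, ∑ j, π i j * (f i - f j))
          = (∑ i, ∑ j, π i j * f i) - (∑ i, ∑ j, π i j * f j) from by
        rw [← Finset.sum_sub_distrib]
        exact Finset.sum_congr rfl fun i _ => by
          rw [← Finset.sum_sub_distrib]
          exact Finset.sum_congr rfl fun j _ => by ring]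
      congr 1
      · exact Finset.sum_congr rfl fun i _ => h1 i
      · rw [Finset.sum_comm]
        exact Finset.sum_congr rfl fun j _ => h2 j
    calc (1:ℝ) = (∑ z, f z * μ z) - (∑ z, f z * ν z) := by rw [hfμ, hfν]; ring
      _ = ∑ i, ∑ j, π i j * (f i - f j) := hsplit.symm
      _ ≤ ∑ i, ∑ j, π i j * ((Gn n).dist i j : ℝ) := by
          refine Finset.sum_le_sum fun i _ => Finset.sum_le_sum fun j _ => ?_
          exact mul_le_mul_of_nonneg_left (hdist i j) (hπ0 i j)


/-- In the graph `Gn n` (`n ≥ 3`), the Wasserstein distance between the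
α-lazy random walk measures at `a₀` and `b₀` is at least `1`; equivalently,
`κ^α(a₀b₀) ≤ 0`, for every `α ∈ [0,1]`. -/
theorem wasserstein_ge_one_config (n : ℕ) (hn : 3 ≤ n)
    (α : ℝ) (hα0 : 0 ≤ α) (hα1 : α ≤ 1) :
    1 ≤ Wass (Gn n) (lazyWalk (Gn n) α (Sum.inl ⟨0, by omega⟩))
        (lazyWalk (Gn n) α (Sum.inr ⟨0, by omega⟩)) ∧
    kappa (Gn n) α (Sum.inl ⟨0, by omega⟩) (Sum.inr ⟨0, by omega⟩) ≤ 0 := by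
  have hW : 1 ≤ Wass (Gn n) (lazyWalk (Gn n) α (Sum.inl ⟨0, by omega⟩))
      (lazyWalk (Gn n) α (Sum.inr ⟨0, by omega⟩)) :=
    wass_ge_one hn (by omega) α hα0 hα1
  refine ⟨hW, ?_⟩
  unfold kappa
  exact sub_nonpos.mpr hW
end
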